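/- Fix n ≥ 2, 1 ≤ k ≤ n and 1 ≤ i < n, and let (1^k) denote the single-column partition. Let b ∈ SVT^n((1^k)) satisfy e_i b = 0 and e_i^K b = 0, and let S (the i-K-string through b) be the set of all nonzero elements of the form f_i^m b (m ≥ 0) and f_i^m f_i^K b (m ≥ 0). Then for every w ∈ S_n and every reduced word (i_1,…,i_ℓ) of w, the intersection SVT^n_{(i_1,…,i_ℓ)}((1^k)) ∩ S is either empty, equal to all of S, or equal to the singleton {b}. -/

import Mathlib

open scoped Classical

noncomputable section

namespace SVTCrystal

/-- A filling assigns to each (row, column) position (0-indexed) a finite set of entries. -/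
abbrev Filling : Type := ℕ → ℕ → Finset ℕ

/-- `lam` is a partition shape with at most `n` rows. -/
def IsPartitionShape (n : ℕ) (lam : ℕ → ℕ) : Prop :=
  (∀ r, lam (r + 1) ≤ lam r) ∧ (∀ r, n ≤ r → lam r = 0)

/-- Semistandard set-valued tableau of shape `lam` with entries in `{1,…,n}`. -/
structure IsSVT (n : ℕ) (lam : ℕ → ℕ) (t : Filling) : Prop where
  boxNonempty : ∀ r c, c < lam r → (t r c).Nonempty
  emptyOutside : ∀ r c, ¬ c < lam r → t r c = ∅
  entryBounds : ∀ r c a, a ∈ t r c → 1 ≤ a ∧ a ≤ n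
  rowWeak : ∀ r c a b, a ∈ t r c → b ∈ t r (c + 1) → a ≤ b
  colStrict : ∀ r c a b, a ∈ t r c → b ∈ t (r + 1) c → a < b

/-- Semistandard Young tableau: a set-valued tableau all of whose boxes are singletons. -/
def IsSSYT (n : ℕ) (lam : ℕ → ℕ) (t : Filling) : Prop :=
  IsSVT n lam t ∧ ∀ r c, c < lam r → (t r c).card = 1

/-- The weight: `wt n lam t j` is the number of boxes of `t` containing the entry `j`. -/
def wt (n : ℕ) (lam : ℕ → ℕ) (t : Filling) (j : ℕ) : ℕ :=
  ((Finset.range n ×ˢ Finset.range (lam 0)).filter (fun p => j ∈ t p.1 p.2)).card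

/-- The excess: total number of extra entries. -/
def excess (n : ℕ) (lam : ℕ → ℕ) (t : Filling) : ℕ :=
  ∑ p ∈ Finset.range n ×ˢ Finset.range (lam 0), ((t p.1 p.2).card - 1)

/-- Column `c` contains the entry `a`. -/
def colHas (n : ℕ) (t : Filling) (a c : ℕ) : Prop := ∃ r, r < n ∧ a ∈ t r c

/-- The sign of column `c` for the `i`-signature rule: `+` (true) if the column contains `i`
but not `i+1`, `-` (false) if it contains `i+1` but not `i`. -/
def colSign (n : ℕ) (t : Filling) (i c : ℕ) : Option Bool :=
  if colHas n t i c ∧ ¬ colHas n t (i + 1) c then some true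
  else if colHas n t (i + 1) c ∧ ¬ colHas n t i c then some false
  else none

/-- The number of `-` (false) signs left uncanceled after scanning the word left-to-right,
iteratively canceling `-+` pairs. -/
def mctr (w : List Bool) : ℕ := w.foldl (fun cnt b => if b then cnt - 1 else cnt + 1) 0

/-- The number of `+` (true) signs left uncanceled, scanning right-to-left. -/
def pctr (w : List Bool) : ℕ := w.foldr (fun b cnt => if b then cnt + 1 else cnt - 1) 0

/-- The word of column signs of the columns before column `c`. -/
def colWordBefore (n : ℕ) (t : Filling) (i c : ℕ) : List Bool :=
  (List.range c).filterMap (colSign n t i)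

/-- The word of column signs of the columns after column `c` (among columns `< ncols`). -/
def colWordAfter (n ncols : ℕ) (t : Filling) (i c : ℕ) : List Bool :=
  ((List.range ncols).drop (c + 1)).filterMap (colSign n t i)

/-- Column `c` carries an uncanceled `+` for the `i`-signature rule. -/
def PlusCol (n ncols : ℕ) (t : Filling) (i c : ℕ) : Prop :=
  c < ncols ∧ colSign n t i c = some true ∧ mctr (colWordBefore n t i c) = 0

/-- Column `c` carries an uncanceled `-` for the `i`-signature rule. -/
def MinusCol (n ncols : ℕ) (t : Filling) (i c : ℕ) : Prop :=
  c < ncols ∧ colSign n t i c = some false ∧ pctr (colWordAfter n ncols t i c) = 0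

/-- Column `c` is the rightmost uncanceled `+`. -/
def fBoxCol (n ncols : ℕ) (t : Filling) (i c : ℕ) : Prop :=
  PlusCol n ncols t i c ∧ ∀ c', PlusCol n ncols t i c' → c' ≤ c

/-- Column `c` is the leftmost uncanceled `-`. -/
def eBoxCol (n ncols : ℕ) (t : Filling) (i c : ℕ) : Prop :=
  MinusCol n ncols t i c ∧ ∀ c', MinusCol n ncols t i c' → c ≤ c'

/-- Replace the content of the box in row `r`, column `c` by `A`. -/
def updateBox (t : Filling) (r c : ℕ) (A : Finset ℕ) : Filling :=
  fun r' c' => if r' = r ∧ c' = c then A else t r' c'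

/-- The set-valued crystal operator `f_i` (signature rule). -/
def fRaw (n : ℕ) (lam : ℕ → ℕ) (i : ℕ) (t : Filling) : Option Filling :=
  if h : ∃ c, fBoxCol n (lam 0) t i c then
    let c := Classical.choose h
    if hr : ∃ r, r < n ∧ i ∈ t r c then
      let r := Classical.choose hr
      if i ∈ t r (c + 1) then
        some (updateBox (updateBox t r (c + 1) ((t r (c + 1)).erase i)) r c
          (insert (i + 1) (t r c)))
      else some (updateBox t r c (insert (i + 1) ((t r c).erase i)))
    else none
  else none

/-- The set-valued crystal operator `e_i` (signature rule). -/
def eRaw (n : ℕ) (lam : ℕ → ℕ) (i : ℕ) (t : Filling) : Option Filling :=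
  if h : ∃ c, eBoxCol n (lam 0) t i c then
    let c := Classical.choose h
    if hr : ∃ r, r < n ∧ (i + 1) ∈ t r c then
      let r := Classical.choose hr
      if 0 < c ∧ (i + 1) ∈ t r (c - 1) then
        some (updateBox (updateBox t r (c - 1) ((t r (c - 1)).erase (i + 1))) r c
          (insert i (t r c)))
      else some (updateBox t r c (insert i ((t r c).erase (i + 1))))
    else none
  else none

/-- Iterate a partially-defined operator. -/
def iterOpt (g : Filling → Option Filling) : ℕ → Filling → Option Filling
  | 0, t => some t
  | m + 1, t => (iterOpt g m t).bind g

/-- Highest weight (Yamanouchi) elements. -/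
def IsYamanouchi (n : ℕ) (lam : ℕ → ℕ) (t : Filling) : Prop :=
  ∀ i, 1 ≤ i → i < n → eRaw n lam i t = none

/-- Closure of `t0` under the crystal operators `e_i`, `f_i` for `1 ≤ i < n`. -/
inductive Reach (n : ℕ) (lam : ℕ → ℕ) (t0 : Filling) : Filling → Prop
  | base : Reach n lam t0 t0
  | stepF : ∀ {t t' : Filling} (i : ℕ), 1 ≤ i → i < n → Reach n lam t0 t →
      fRaw n lam i t = some t' → Reach n lam t0 t'
  | stepE : ∀ {t t' : Filling} (i : ℕ), 1 ≤ i → i < n → Reach n lam t0 t →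
      eRaw n lam i t = some t' → Reach n lam t0 t'

/-- The one-row partition `(s)`. -/
def rowShape (s : ℕ) : ℕ → ℕ := fun r => if r = 0 then s else 0

/-- The one-column partition `(1^k)`. -/
def colShape (k : ℕ) : ℕ → ℕ := fun r => if r < k then 1 else 0

/-- The hook partition `(s, 1^e)`. -/
def hookShape (s e : ℕ) : ℕ → ℕ := fun r => if r = 0 then s else if r ≤ e then 1 else 0

/-! ### K-theory crystal operators (for single rows and single columns) -/

/-- Some box of the tableau contains the entry `a`. -/
def containsEntry (n : ℕ) (lam : ℕ → ℕ) (t : Filling) (a : ℕ) : Prop :=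
  ∃ r c, r < n ∧ c < lam r ∧ a ∈ t r c

/-- `p` is the rightmost box of `t` containing `i`. -/
def KBoxF (n : ℕ) (lam : ℕ → ℕ) (t : Filling) (i : ℕ) (p : ℕ × ℕ) : Prop :=
  p.1 < n ∧ p.2 < lam p.1 ∧ i ∈ t p.1 p.2 ∧
    ∀ q : ℕ × ℕ, q.1 < n → q.2 < lam q.1 → i ∈ t q.1 q.2 → q.2 ≤ p.2

/-- The K-crystal operator `f_i^K`: if `i` occurs in `t` and `i+1` does not, add `i+1` to
the rightmost box containing `i`; otherwise `0`. -/
def fK (n : ℕ) (lam : ℕ → ℕ) (i : ℕ) (t : Filling) : Option Filling :=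
  if h : (∃ p : ℕ × ℕ, KBoxF n lam t i p) ∧ ¬ containsEntry n lam t (i + 1) then
    let p := Classical.choose h.1
    some (updateBox t p.1 p.2 (insert (i + 1) (t p.1 p.2)))
  else none

/-- The K-crystal operator `e_i^K`: delete `i+1` from the box containing both `i` and `i+1`,
if such a box exists; otherwise `0`. -/
def eK (n : ℕ) (lam : ℕ → ℕ) (i : ℕ) (t : Filling) : Option Filling :=
  if h : ∃ p : ℕ × ℕ, p.1 < n ∧ p.2 < lam p.1 ∧ i ∈ t p.1 p.2 ∧ (i + 1) ∈ t p.1 p.2 then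
    let p := Classical.choose h
    some (updateBox t p.1 p.2 ((t p.1 p.2).erase (i + 1)))
  else none

/-- `t'` is the result of applying `g` to `t` as many times as possible. -/
def MaxApply (g : Filling → Option Filling) (t t' : Filling) : Prop :=
  (∃ m, iterOpt g m t = some t') ∧ g t' = none

/-- One Demazure step: apply `e_i` as many times as possible, then `e_i^K` as many times
as possible (here `eKop i` is the `i`-th K-operator). -/
def DemStep (n : ℕ) (lam : ℕ → ℕ) (eKop : ℕ → Filling → Option Filling) (i : ℕ)
    (t t' : Filling) : Prop :=
  ∃ t1, MaxApply (eRaw n lam i) t t1 ∧ MaxApply (eKop i) t1 t'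

/-- `DemReach n lam eKop [i₁,…,iℓ] t u` holds when
`u = (e_{iℓ}^K)^max e_{iℓ}^max ⋯ (e_{i₁}^K)^max e_{i₁}^max t`. -/
def DemReach (n : ℕ) (lam : ℕ → ℕ) (eKop : ℕ → Filling → Option Filling) :
    List ℕ → Filling → Filling → Prop
  | [], t, u => t = u
  | i :: rest, t, u => ∃ t2, DemStep n lam eKop i t t2 ∧ DemReach n lam eKop rest t2 u

/-- The minimal highest weight tableau `u_λ`, whose row `r` boxes are all `{r+1}`. -/
def uTab (lam : ℕ → ℕ) : Filling := fun r c => if c < lam r then {r + 1} else ∅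

/-- The K-Demazure crystal associated with a word `[i₁,…,iℓ]`. -/
def KDem (n : ℕ) (lam : ℕ → ℕ) (eKop : ℕ → Filling → Option Filling) (word : List ℕ) :
    Set Filling :=
  {t | IsSVT n lam t ∧ DemReach n lam eKop word t (uTab lam)}

/-! ### Permutations and reduced words -/

/-- The permutation `s_{i₁} ⋯ s_{iℓ}` of a word `[i₁,…,iℓ]`, where `s_i` swaps `i`, `i+1`. -/
def wordPerm (word : List ℕ) : Equiv.Perm ℕ :=
  (word.map fun i => Equiv.swap i (i + 1)).prod

/-- `word` is a reduced word for `w` in the Coxeter generators `s_1, …, s_{n-1}`. -/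
def IsReducedWord (n : ℕ) (w : Equiv.Perm ℕ) (word : List ℕ) : Prop :=
  (∀ i ∈ word, 1 ≤ i ∧ i < n) ∧ wordPerm word = w ∧
    ∀ word' : List ℕ, (∀ i ∈ word', 1 ≤ i ∧ i < n) → wordPerm word' = w →
      word.length ≤ word'.length

/-- The Coxeter length of a permutation of `{1,…,n}`. -/
def permLength (n : ℕ) (σ : Equiv.Perm ℕ) : ℕ :=
  sInf {l | ∃ word : List ℕ, (∀ i ∈ word, 1 ≤ i ∧ i < n) ∧ wordPerm word = σ ∧
    word.length = l}

/-- The parabolic subgroup generated by `s_2, …, s_{n-1}`. -/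
def parabolic (n : ℕ) : Subgroup (Equiv.Perm ℕ) :=
  Subgroup.closure {σ | ∃ i, 2 ≤ i ∧ i < n ∧ σ = Equiv.swap i (i + 1)}

/-! ### Polynomials -/

/-- Polynomials in `x₁, x₂, …` over `ℤ[β]`; the variable `β` is `Polynomial.X`. -/
abbrev KPoly : Type := MvPolynomial ℕ (Polynomial ℤ)

/-- The scalar `β`. -/
def betaP : KPoly := MvPolynomial.C Polynomial.X

/-- The monomial `x^{wt(T)} = x₁^{wt₁} ⋯ xₙ^{wtₙ}`. -/
def xwt (n : ℕ) (lam : ℕ → ℕ) (t : Filling) : KPoly :=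
  ∏ j ∈ Finset.Icc 1 n, (MvPolynomial.X j : KPoly) ^ wt n lam t j

/-- The β-character `∑_{T ∈ S} β^{excess T} x^{wt T}` of a set of tableaux. -/
def charSet (n : ℕ) (lam : ℕ → ℕ) (S : Set Filling) : KPoly :=
  ∑ᶠ t ∈ S, betaP ^ excess n lam t * xwt n lam t

/-- The symmetric Grothendieck polynomial `𝔊_λ(x₁,…,xₙ; β)`. -/
def Groth (n : ℕ) (lam : ℕ → ℕ) : KPoly :=
  charSet n lam {t | IsSVT n lam t}

/-- The Schur polynomial `s_μ(x₁,…,xₙ)`. -/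
def SchurP (n : ℕ) (mu : ℕ → ℕ) : KPoly :=
  ∑ᶠ t ∈ {t : Filling | IsSSYT n mu t}, xwt n mu t

/-- The numerator defining the Demazure–Lascoux operator `ϖ_i`. -/
def DLnum (i : ℕ) (f : KPoly) : KPoly :=
  (MvPolynomial.X i + betaP * MvPolynomial.X i * MvPolynomial.X (i + 1)) * f -
    (MvPolynomial.X (i + 1) + betaP * MvPolynomial.X i * MvPolynomial.X (i + 1)) *
      (MvPolynomial.rename (Equiv.swap i (i + 1)) f)

/-- `DL` implements the Demazure–Lascoux operators `ϖ_i` for `1 ≤ i < n`: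
`(x_i - x_{i+1}) · ϖ_i f` equals the defining numerator. -/
def IsDLOp (n : ℕ) (DL : ℕ → KPoly → KPoly) : Prop :=
  ∀ i, 1 ≤ i → i < n → ∀ f : KPoly,
    (MvPolynomial.X i - MvPolynomial.X (i + 1)) * DL i f = DLnum i f

/-- `applyDL DL [i₁,…,iℓ] f = ϖ_{i₁} ϖ_{i₂} ⋯ ϖ_{iℓ} f`. -/
def applyDL (DL : ℕ → KPoly → KPoly) : List ℕ → KPoly → KPoly
  | [], f => f
  | i :: rest, f => DL i (applyDL DL rest f)

/-!
For a single column the Demazure step `(e_j^K)^max e_j^max` is explicit: it turns the entry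
`j + 1` into `j` (a swap if `j` is absent, the deletion of `j + 1` if `j` shares its box) when
the result is again a column, and does nothing otherwise. By induction along the word, a column
lies in the K-Demazure crystal exactly when, for every `r`, the entries of box `r` are at most
the `(r+1)`-st smallest element of the key of the word, i.e. of `{1,…,k}` moved by the
Demazure action of the letters.

The `i`-K-string through a column `b` is either `{b}` or `{b, f_i b, f_i^K b}`. The last two
tableaux carry the same largest entry `i + 1` in the box where `b` has `i`, and otherwise agree
with `b`; so the key condition holds for both or for neither, and when it holds it holds for `b`.
-/

section Iterate

variable {g : Filling → Option Filling}

lemma iterOpt_succ' (m : ℕ) (t : Filling) :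
    iterOpt g (m + 1) t = (g t).bind (iterOpt g m) := by
  induction m generalizing t with
  | zero => simp [iterOpt]
  | succ m ih =>
    rw [iterOpt, ih]
    cases g t <;> rfl

lemma eq_of_iterOpt_of_eq_none {t x : Filling} (hg : g t = none) :
    ∀ {m}, iterOpt g m t = some x → x = t
  | 0, h => (Option.some.inj h).symm
  | m + 1, h => by simp [iterOpt_succ', hg] at h

lemma iterOpt_add (a b : ℕ) (t : Filling) :
    iterOpt g (a + b) t = (iterOpt g a t).bind (iterOpt g b) := by
  induction b with
  | zero => cases iterOpt g a t <;> rfl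
  | succ b ih =>
    rw [← Nat.add_assoc, iterOpt, ih]
    cases iterOpt g a t <;> rfl

lemma MaxApply.unique {t a b : Filling} (ha : MaxApply g t a) (hb : MaxApply g t b) :
    a = b := by
  obtain ⟨⟨m, hm⟩, hga⟩ := ha
  obtain ⟨⟨m', hm'⟩, hgb⟩ := hb
  rcases le_total m m' with h | h
  · obtain ⟨d, rfl⟩ := Nat.exists_eq_add_of_le h
    rw [iterOpt_add, hm] at hm'
    exact (eq_of_iterOpt_of_eq_none hga hm').symm
  · obtain ⟨d, rfl⟩ := Nat.exists_eq_add_of_le h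
    rw [iterOpt_add, hm'] at hm
    exact eq_of_iterOpt_of_eq_none hgb hm

lemma maxApply_self {t : Filling} (hg : g t = none) : MaxApply g t t := ⟨⟨0, rfl⟩, hg⟩

lemma maxApply_of_eq_some {t t' : Filling} (h : g t = some t') (h' : g t' = none) :
    MaxApply g t t' :=
  ⟨⟨1, h⟩, h'⟩

lemma DemStep.unique {n : ℕ} {lam : ℕ → ℕ} {eKop : ℕ → Filling → Option Filling} {j : ℕ}
    {t a b : Filling} (ha : DemStep n lam eKop j t a) (hb : DemStep n lam eKop j t b) :
    a = b := by
  obtain ⟨t1, h1, h2⟩ := ha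
  obtain ⟨t1', h1', h2'⟩ := hb
  obtain rfl := h1.unique h1'
  exact h2.unique h2'

end Iterate

section Column

variable {n k : ℕ} {t : Filling}

lemma lt_colShape_iff {c r : ℕ} : c < colShape k r ↔ c = 0 ∧ r < k := by
  unfold colShape; split_ifs <;> omega

namespace IsSVT

lemma mem_colShape (ht : IsSVT n (colShape k) t) {r c a : ℕ} (ha : a ∈ t r c) :
    c = 0 ∧ r < k := by
  by_contra h
  rw [ht.emptyOutside r c (lt_colShape_iff.not.2 h)] at ha
  simp at ha

lemma eq_empty_of_pos (ht : IsSVT n (colShape k) t) {r c : ℕ} (hc : 0 < c) : t r c = ∅ :=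
  ht.emptyOutside r c (by rw [lt_colShape_iff]; omega)

lemma nonempty_colShape (ht : IsSVT n (colShape k) t) {r : ℕ} (hr : r < k) :
    (t r 0).Nonempty :=
  ht.boxNonempty r 0 (lt_colShape_iff.2 ⟨rfl, hr⟩)

lemma lt_of_row_lt (ht : IsSVT n (colShape k) t) {r r' a a' : ℕ} (h : r < r')
    (ha : a ∈ t r 0) (ha' : a' ∈ t r' 0) : a < a' := by
  induction r', h using Nat.le_induction generalizing a' with
  | base => exact ht.colStrict r 0 a a' ha ha'
  | succ r' hr ih =>
    obtain ⟨y, hy⟩ := ht.nonempty_colShape (r := r') (by have := (ht.mem_colShape ha').2; omega)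
    exact (ih hy).trans (ht.colStrict r' 0 y a' hy ha')

lemma row_eq_of_mem (ht : IsSVT n (colShape k) t) {r r' a : ℕ} (ha : a ∈ t r 0)
    (ha' : a ∈ t r' 0) : r = r' := by
  by_contra h
  rcases Nat.lt_or_gt_of_ne h with h | h
  · exact (ht.lt_of_row_lt h ha ha').false
  · exact (ht.lt_of_row_lt h ha' ha).false

lemma row_succ_le (ht : IsSVT n (colShape k) t) {r a : ℕ} (ha : a ∈ t r 0) : r + 1 ≤ a := by
  induction r generalizing a with
  | zero => exact (ht.entryBounds 0 0 a ha).1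
  | succ r ih =>
    obtain ⟨y, hy⟩ := ht.nonempty_colShape (r := r) (by have := (ht.mem_colShape ha).2; omega)
    have := ih hy
    have := ht.colStrict r 0 y a hy ha
    omega

lemma row_lt (ht : IsSVT n (colShape k) t) {r c a : ℕ} (ha : a ∈ t r c) : r < n := by
  obtain ⟨rfl, -⟩ := ht.mem_colShape ha
  have := ht.row_succ_le ha
  have := (ht.entryBounds r 0 a ha).2
  omega

end IsSVT

end Column

section ColumnOperators

variable {n k : ℕ} {t : Filling} {i ρ : ℕ}

lemma colSign_eq_some_true_iff {c : ℕ} :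
    colSign n t i c = some true ↔ colHas n t i c ∧ ¬ colHas n t (i + 1) c := by
  unfold colSign; split_ifs with h1 h2 <;> simp [h1]

lemma colSign_eq_some_false_iff {c : ℕ} :
    colSign n t i c = some false ↔ colHas n t (i + 1) c ∧ ¬ colHas n t i c := by
  unfold colSign; split_ifs with h1 h2 <;> simp_all

lemma colShape_zero_of_mem (ht : IsSVT n (colShape k) t) {r a : ℕ} (ha : a ∈ t r 0) :
    colShape k 0 = 1 := by
  have := (ht.mem_colShape ha).2
  unfold colShape; rw [if_pos (by omega)]

lemma colHas_of_fBoxCol_colShape {c : ℕ} (h : fBoxCol n (colShape k 0) t i c) :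
    colHas n t i 0 ∧ ¬ colHas n t (i + 1) 0 := by
  obtain ⟨⟨hc, hs, -⟩, -⟩ := h
  obtain rfl : c = 0 := (lt_colShape_iff.1 hc).1
  exact colSign_eq_some_true_iff.1 hs

lemma colHas_of_eBoxCol_colShape {c : ℕ} (h : eBoxCol n (colShape k 0) t i c) :
    colHas n t (i + 1) 0 ∧ ¬ colHas n t i 0 := by
  obtain ⟨⟨hc, hs, -⟩, -⟩ := h
  obtain rfl : c = 0 := (lt_colShape_iff.1 hc).1
  exact colSign_eq_some_false_iff.1 hs

lemma exists_fBoxCol_colShape_iff (ht : IsSVT n (colShape k) t) :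
    (∃ c, fBoxCol n (colShape k 0) t i c) ↔ colHas n t i 0 ∧ ¬ colHas n t (i + 1) 0 := by
  refine ⟨fun ⟨_, h⟩ => colHas_of_fBoxCol_colShape h, fun h => ?_⟩
  obtain ⟨r, -, hr⟩ := h.1
  have hk := colShape_zero_of_mem ht hr
  refine ⟨0, ⟨by omega, colSign_eq_some_true_iff.2 h, rfl⟩, fun c' hc' => ?_⟩
  have := hc'.1
  omega

lemma exists_eBoxCol_colShape_iff (ht : IsSVT n (colShape k) t) :
    (∃ c, eBoxCol n (colShape k 0) t i c) ↔ colHas n t (i + 1) 0 ∧ ¬ colHas n t i 0 := by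
  refine ⟨fun ⟨_, h⟩ => colHas_of_eBoxCol_colShape h, fun h => ?_⟩
  obtain ⟨r, -, hr⟩ := h.1
  have hk := colShape_zero_of_mem ht hr
  refine ⟨0, ⟨by omega, colSign_eq_some_false_iff.2 h, by rw [hk]; rfl⟩,
    fun c' _ => Nat.zero_le c'⟩

lemma fRaw_colShape_eq_none (h : ¬ (colHas n t i 0 ∧ ¬ colHas n t (i + 1) 0)) :
    fRaw n (colShape k) i t = none := by
  unfold fRaw
  rw [dif_neg fun ⟨_, hc⟩ => h (colHas_of_fBoxCol_colShape hc)]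

lemma fRaw_colShape_eq_some (ht : IsSVT n (colShape k) t) (hρ : i ∈ t ρ 0)
    (hi1 : ¬ colHas n t (i + 1) 0) :
    fRaw n (colShape k) i t = some (updateBox t ρ 0 (insert (i + 1) ((t ρ 0).erase i))) := by
  have hex := (exists_fBoxCol_colShape_iff ht).2 ⟨⟨ρ, ht.row_lt hρ, hρ⟩, hi1⟩
  unfold fRaw
  rw [dif_pos hex]
  have hc : Classical.choose hex = 0 := (lt_colShape_iff.1 (Classical.choose_spec hex).1.1).1
  simp only [hc]
  have hr : ∃ r, r < n ∧ i ∈ t r 0 := ⟨ρ, ht.row_lt hρ, hρ⟩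
  rw [dif_pos hr]
  have hρ' : Classical.choose hr = ρ := ht.row_eq_of_mem (Classical.choose_spec hr).2 hρ
  simp only [hρ', zero_add, ht.eq_empty_of_pos one_pos, Finset.notMem_empty, if_false]

lemma eRaw_colShape_eq_none (h : ¬ (colHas n t (i + 1) 0 ∧ ¬ colHas n t i 0)) :
    eRaw n (colShape k) i t = none := by
  unfold eRaw
  rw [dif_neg fun ⟨_, hc⟩ => h (colHas_of_eBoxCol_colShape hc)]

lemma eRaw_colShape_eq_some (ht : IsSVT n (colShape k) t) (hρ : i + 1 ∈ t ρ 0)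
    (hi : ¬ colHas n t i 0) :
    eRaw n (colShape k) i t = some (updateBox t ρ 0 (insert i ((t ρ 0).erase (i + 1)))) := by
  have hex := (exists_eBoxCol_colShape_iff ht).2 ⟨⟨ρ, ht.row_lt hρ, hρ⟩, hi⟩
  unfold eRaw
  rw [dif_pos hex]
  have hc : Classical.choose hex = 0 := (lt_colShape_iff.1 (Classical.choose_spec hex).1.1).1
  simp only [hc]
  have hr : ∃ r, r < n ∧ i + 1 ∈ t r 0 := ⟨ρ, ht.row_lt hρ, hρ⟩
  rw [dif_pos hr]
  have hρ' : Classical.choose hr = ρ := ht.row_eq_of_mem (Classical.choose_spec hr).2 hρ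
  simp only [hρ', lt_irrefl, false_and, if_false]

lemma eK_colShape_eq_none (h : ∀ r, i ∈ t r 0 → i + 1 ∉ t r 0) :
    eK n (colShape k) i t = none := by
  unfold eK
  rw [dif_neg]
  rintro ⟨⟨r, c⟩, -, hc, hi, hi1⟩
  obtain rfl := (lt_colShape_iff.1 hc).1
  exact h r hi hi1

lemma eK_colShape_eq_some (ht : IsSVT n (colShape k) t) (hi : i ∈ t ρ 0) (hi1 : i + 1 ∈ t ρ 0) :
    eK n (colShape k) i t = some (updateBox t ρ 0 ((t ρ 0).erase (i + 1))) := by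
  have hex : ∃ p : ℕ × ℕ, p.1 < n ∧ p.2 < colShape k p.1 ∧ i ∈ t p.1 p.2 ∧ i + 1 ∈ t p.1 p.2 :=
    ⟨(ρ, 0), ht.row_lt hi, lt_colShape_iff.2 ⟨rfl, (ht.mem_colShape hi).2⟩, hi, hi1⟩
  unfold eK
  rw [dif_pos hex]
  obtain ⟨-, hc, hpi, -⟩ := Classical.choose_spec hex
  have h0 := (lt_colShape_iff.1 hc).1
  rw [h0] at hpi
  have hp : Classical.choose hex = (ρ, 0) := Prod.ext (ht.row_eq_of_mem hpi hi) h0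
  simp only [hp]

lemma containsEntry_colShape_iff (ht : IsSVT n (colShape k) t) {a : ℕ} :
    containsEntry n (colShape k) t a ↔ colHas n t a 0 :=
  ⟨fun ⟨r, _, hr, hc, ha⟩ => ⟨r, hr, (lt_colShape_iff.1 hc).1 ▸ ha⟩,
    fun ⟨r, hr, ha⟩ => ⟨r, 0, hr, lt_colShape_iff.2 ⟨rfl, (ht.mem_colShape ha).2⟩, ha⟩⟩

lemma kBoxF_colShape_iff (ht : IsSVT n (colShape k) t) {p : ℕ × ℕ} :
    KBoxF n (colShape k) t i p ↔ p.2 = 0 ∧ i ∈ t p.1 0 := by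
  constructor
  · rintro ⟨-, hc, hi, -⟩
    obtain h0 := (lt_colShape_iff.1 hc).1
    exact ⟨h0, h0 ▸ hi⟩
  · rintro ⟨h0, hi⟩
    exact ⟨ht.row_lt hi, lt_colShape_iff.2 ⟨h0, (ht.mem_colShape hi).2⟩, h0 ▸ hi,
      fun q _ hq _ => (lt_colShape_iff.1 hq).1 ▸ Nat.zero_le _⟩

lemma fK_colShape_eq_none (ht : IsSVT n (colShape k) t)
    (h : ¬ (colHas n t i 0 ∧ ¬ colHas n t (i + 1) 0)) : fK n (colShape k) i t = none := by
  unfold fK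
  rw [dif_neg]
  rintro ⟨⟨p, hp⟩, hno⟩
  obtain ⟨-, hi⟩ := (kBoxF_colShape_iff ht).1 hp
  exact h ⟨⟨p.1, ht.row_lt hi, hi⟩, (containsEntry_colShape_iff ht).not.1 hno⟩

lemma fK_colShape_eq_some (ht : IsSVT n (colShape k) t) (hρ : i ∈ t ρ 0)
    (hi1 : ¬ colHas n t (i + 1) 0) :
    fK n (colShape k) i t = some (updateBox t ρ 0 (insert (i + 1) (t ρ 0))) := by
  have hex : (∃ p, KBoxF n (colShape k) t i p) ∧ ¬ containsEntry n (colShape k) t (i + 1) :=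
    ⟨⟨(ρ, 0), (kBoxF_colShape_iff ht).2 ⟨rfl, hρ⟩⟩, (containsEntry_colShape_iff ht).not.2 hi1⟩
  unfold fK
  rw [dif_pos hex]
  obtain ⟨h0, hi⟩ := (kBoxF_colShape_iff ht).1 (Classical.choose_spec hex.1)
  have hp : Classical.choose hex.1 = (ρ, 0) := Prod.ext (ht.row_eq_of_mem hi hρ) h0
  simp only [hp]

end ColumnOperators

section Lowering

variable {n k : ℕ} {t : Filling} {j : ℕ}

def lowerEntry (j x : ℕ) : ℕ := if x = j + 1 then j else x

def lowerTab (j : ℕ) (t : Filling) : Filling := fun r c => (t r c).image (lowerEntry j)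

def Lowerable (j : ℕ) (t : Filling) : Prop := ∃ ρ, j + 1 ∈ t ρ 0 ∧ ∀ r, j ∈ t r 0 → r = ρ

def colDemStep (j : ℕ) (t : Filling) : Filling := if Lowerable j t then lowerTab j t else t

lemma lowerEntry_le (x : ℕ) : lowerEntry j x ≤ x := by
  unfold lowerEntry; split_ifs <;> omega

lemma lowerEntry_of_ne {x : ℕ} (h : x ≠ j + 1) : lowerEntry j x = x := if_neg h

lemma lowerEntry_succ : lowerEntry j (j + 1) = j := if_pos rfl

lemma succ_notMem_lowerTab (r c : ℕ) : j + 1 ∉ lowerTab j t r c := by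
  simp only [lowerTab, Finset.mem_image, lowerEntry, not_exists, not_and]
  intro x _
  split_ifs <;> omega

lemma image_lowerEntry_of_notMem {B : Finset ℕ} (h : j + 1 ∉ B) : B.image (lowerEntry j) = B := by
  conv_rhs => rw [← Finset.image_id (s := B)]
  exact Finset.image_congr fun x hx => lowerEntry_of_ne fun hx' => h (hx' ▸ hx)

lemma image_lowerEntry_of_mem {B : Finset ℕ} (h : j + 1 ∈ B) :
    B.image (lowerEntry j) = insert j (B.erase (j + 1)) := by
  rw [← Finset.insert_erase h, Finset.image_insert, lowerEntry_succ,
    image_lowerEntry_of_notMem (Finset.notMem_erase _ _), Finset.erase_insert_eq_erase,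
    Finset.erase_idem]

lemma lowerTab_eq_updateBox (ht : IsSVT n (colShape k) t) {ρ : ℕ} (hρ : j + 1 ∈ t ρ 0) :
    lowerTab j t = updateBox t ρ 0 (insert j ((t ρ 0).erase (j + 1))) := by
  funext r c
  unfold lowerTab updateBox
  split_ifs with h
  · obtain ⟨rfl, rfl⟩ := h
    exact image_lowerEntry_of_mem hρ
  · refine image_lowerEntry_of_notMem fun hm => h ?_
    obtain ⟨rfl, -⟩ := ht.mem_colShape hm
    exact ⟨ht.row_eq_of_mem hm hρ, rfl⟩

lemma isSVT_lowerTab {lam : ℕ → ℕ} (ht : IsSVT n lam t) (hj : 1 ≤ j)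
    (hadj : ∀ r c, j ∈ t r c → j + 1 ∉ t (r + 1) c) : IsSVT n lam (lowerTab j t) where
  boxNonempty r c hc := (ht.boxNonempty r c hc).image _
  emptyOutside r c hc := by simp [lowerTab, ht.emptyOutside r c hc]
  entryBounds r c a ha := by
    obtain ⟨x, hx, rfl⟩ := Finset.mem_image.1 ha
    have := ht.entryBounds r c x hx
    unfold lowerEntry; split_ifs <;> omega
  rowWeak r c a b ha hb := by
    obtain ⟨x, hx, rfl⟩ := Finset.mem_image.1 ha
    obtain ⟨y, hy, rfl⟩ := Finset.mem_image.1 hb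
    have := ht.rowWeak r c x y hx hy
    unfold lowerEntry; split_ifs <;> omega
  colStrict r c a b ha hb := by
    obtain ⟨x, hx, rfl⟩ := Finset.mem_image.1 ha
    obtain ⟨y, hy, rfl⟩ := Finset.mem_image.1 hb
    have := ht.colStrict r c x y hx hy
    have : ¬ (x = j ∧ y = j + 1) := fun ⟨hxj, hyj⟩ => hadj r c (hxj ▸ hx) (hyj ▸ hy)
    unfold lowerEntry; split_ifs <;> omega

lemma isSVT_colDemStep (ht : IsSVT n (colShape k) t) (hj : 1 ≤ j) :
    IsSVT n (colShape k) (colDemStep j t) := by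
  unfold colDemStep
  split_ifs with hL
  · obtain ⟨ρ, hρ, hu⟩ := hL
    refine isSVT_lowerTab ht hj fun r c hjr hj1 => ?_
    obtain ⟨rfl, -⟩ := ht.mem_colShape hjr
    have := hu r hjr
    have := ht.row_eq_of_mem hj1 hρ
    omega
  · exact ht

lemma demStep_colDemStep (ht : IsSVT n (colShape k) t) :
    DemStep n (colShape k) (eK n (colShape k)) j t (colDemStep j t) := by
  have heRaw_low : eRaw n (colShape k) j (lowerTab j t) = none :=
    eRaw_colShape_eq_none fun ⟨⟨r, _, hr⟩, _⟩ => succ_notMem_lowerTab r 0 hr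
  have heK_low : eK n (colShape k) j (lowerTab j t) = none :=
    eK_colShape_eq_none fun r _ hr => succ_notMem_lowerTab r 0 hr
  unfold colDemStep
  split_ifs with hL
  · obtain ⟨ρ, hρ, hu⟩ := hL
    by_cases hjρ : j ∈ t ρ 0
    · have he : eRaw n (colShape k) j t = none :=
        eRaw_colShape_eq_none fun h => h.2 ⟨ρ, ht.row_lt hjρ, hjρ⟩
      have heK : eK n (colShape k) j t = some (lowerTab j t) := by
        rw [eK_colShape_eq_some ht hjρ hρ, lowerTab_eq_updateBox ht hρ,
          Finset.insert_eq_of_mem (Finset.mem_erase.2 ⟨by omega, hjρ⟩)]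
      exact ⟨t, maxApply_self he, maxApply_of_eq_some heK heK_low⟩
    · have hj : ¬ colHas n t j 0 := fun ⟨r, _, hr⟩ => hjρ (hu r hr ▸ hr)
      have he : eRaw n (colShape k) j t = some (lowerTab j t) := by
        rw [eRaw_colShape_eq_some ht hρ hj, lowerTab_eq_updateBox ht hρ]
      exact ⟨lowerTab j t, maxApply_of_eq_some he heRaw_low, maxApply_self heK_low⟩
  · have he : eRaw n (colShape k) j t = none :=
      eRaw_colShape_eq_none fun ⟨⟨ρ, _, hρ⟩, hj⟩ =>
        hL ⟨ρ, hρ, fun r hr => (hj ⟨r, ht.row_lt hr, hr⟩).elim⟩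
    have heK : eK n (colShape k) j t = none :=
      eK_colShape_eq_none fun r hj hj1 => hL ⟨r, hj1, fun r' hr' => ht.row_eq_of_mem hr' hj⟩
    exact ⟨t, maxApply_self he, maxApply_self heK⟩

lemma demStep_colShape_iff (ht : IsSVT n (colShape k) t) {t' : Filling} :
    DemStep n (colShape k) (eK n (colShape k)) j t t' ↔ t' = colDemStep j t :=
  ⟨fun h => h.unique (demStep_colDemStep ht), fun h => h ▸ demStep_colDemStep ht⟩

end Lowering

section Key

variable {n k : ℕ} {t : Filling} {I : Finset ℕ} {j : ℕ}

def countLt (I : Finset ℕ) (x : ℕ) : ℕ := (I.filter (· < x)).card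

def raiseKey (j : ℕ) (I : Finset ℕ) : Finset ℕ :=
  if j ∈ I ∧ j + 1 ∉ I then insert (j + 1) (I.erase j) else I

def demazureKey (k : ℕ) : List ℕ → Finset ℕ
  | [] => Finset.Icc 1 k
  | j :: v => raiseKey j (demazureKey k v)

/-- `countLt I x ≤ r` says that `x` is at most the `(r+1)`-st smallest element of `I`. -/
def BoundedByKey (k : ℕ) (I : Finset ℕ) (t : Filling) : Prop :=
  ∀ r < k, ∀ x ∈ t r 0, countLt I x ≤ r

lemma countLt_mono (I : Finset ℕ) : Monotone (countLt I) := fun _ _ hxy =>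
  Finset.card_le_card (Finset.monotone_filter_right _ fun _ _ h => lt_of_lt_of_le h hxy)

lemma countLt_succ (I : Finset ℕ) (x : ℕ) :
    countLt I (x + 1) = countLt I x + if x ∈ I then 1 else 0 := by
  have : I.filter (· < x + 1) = I.filter (· < x) ∪ I.filter (· = x) := by
    ext y
    simp only [Finset.mem_filter, Finset.mem_union, Nat.lt_succ_iff_lt_or_eq, and_or_left]
  rw [countLt, countLt, this, Finset.card_union_of_disjoint, Finset.filter_eq']
  · split_ifs <;> simp
  · exact Finset.disjoint_filter.2 fun _ _ h h' => (h' ▸ h).false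

lemma countLt_succ_of_mem (h : j ∈ I) : countLt I (j + 1) = countLt I j + 1 := by
  simp [countLt_succ, h]

lemma countLt_succ_of_notMem (h : j ∉ I) : countLt I (j + 1) = countLt I j := by
  simp [countLt_succ, h]

lemma countLt_succ_le (I : Finset ℕ) (x : ℕ) : countLt I (x + 1) ≤ countLt I x + 1 := by
  rw [countLt_succ]; split_ifs <;> omega

lemma countLt_lt_card {a : ℕ} (h : a ∈ I) : countLt I a < I.card :=
  Finset.card_lt_card (Finset.filter_ssubset.2 ⟨a, h, lt_irrefl a⟩)

lemma countLt_Icc_one (k x : ℕ) : countLt (Finset.Icc 1 k) x = min (x - 1) k := by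
  have : (Finset.Icc 1 k).filter (· < x) = Finset.Icc 1 (min (x - 1) k) := by
    ext y; simp only [Finset.mem_filter, Finset.mem_Icc]; omega
  rw [countLt, this, Nat.card_Icc, Nat.add_sub_cancel]

lemma countLt_raise (hj : j ∈ I) (hj1 : j + 1 ∉ I) (x : ℕ) :
    countLt (insert (j + 1) (I.erase j)) x = countLt I (lowerEntry j x) := by
  have hjx : j ∈ I.filter (· < x) ↔ j < x := by simp [hj]
  rw [countLt, Finset.filter_insert, Finset.filter_erase]
  rcases lt_trichotomy x (j + 1) with hx | rfl | hx
  · rw [if_neg (by omega), Finset.erase_eq_of_notMem (by rw [hjx]; omega),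
      lowerEntry_of_ne hx.ne, countLt]
  · rw [if_neg (lt_irrefl _), Finset.card_erase_of_mem (hjx.2 (by omega)), lowerEntry_succ,
      ← countLt, countLt_succ_of_mem hj, Nat.add_sub_cancel]
  · rw [if_pos hx, Finset.card_insert_of_notMem (by simp [hj1]),
      Finset.card_erase_add_one (hjx.2 (by omega)), lowerEntry_of_ne hx.ne', countLt]

lemma card_raiseKey (j : ℕ) (I : Finset ℕ) : (raiseKey j I).card = I.card := by
  unfold raiseKey
  split_ifs with h
  · rw [Finset.card_insert_of_notMem fun h' => h.2 (Finset.mem_of_mem_erase h'),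
      Finset.card_erase_add_one h.1]
  · rfl

lemma card_demazureKey (k : ℕ) : ∀ v : List ℕ, (demazureKey k v).card = k
  | [] => by simp [demazureKey]
  | j :: v => by rw [demazureKey, card_raiseKey, card_demazureKey k v]

lemma boundedByKey_lowerTab_iff :
    BoundedByKey k I (lowerTab j t) ↔ ∀ r < k, ∀ x ∈ t r 0, countLt I (lowerEntry j x) ≤ r := by
  simp [BoundedByKey, lowerTab]

lemma BoundedByKey.lowerTab (h : BoundedByKey k I t) : BoundedByKey k I (lowerTab j t) :=
  boundedByKey_lowerTab_iff.2 fun r hr x hx =>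
    (countLt_mono I (lowerEntry_le x)).trans (h r hr x hx)

lemma boundedByKey_raise (hj : j ∈ I) (hj1 : j + 1 ∉ I) :
    BoundedByKey k (insert (j + 1) (I.erase j)) t ↔ BoundedByKey k I (lowerTab j t) := by
  rw [boundedByKey_lowerTab_iff]
  simp only [BoundedByKey, countLt_raise hj hj1]

end Key

section KeyCharacterization

variable {n k : ℕ} {t : Filling} {I : Finset ℕ} {j : ℕ}

lemma boundedByKey_of_lowerTab (h : BoundedByKey k I (lowerTab j t))
    (hsucc : ∀ r < k, j + 1 ∈ t r 0 → countLt I j ≤ r → countLt I (j + 1) ≤ r) :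
    BoundedByKey k I t := by
  rw [boundedByKey_lowerTab_iff] at h
  intro r hr x hx
  rcases eq_or_ne x (j + 1) with rfl | hx1
  · exact hsucc r hr hx (by simpa [lowerEntry_succ] using h r hr _ hx)
  · simpa [lowerEntry_of_ne hx1] using h r hr x hx

lemma boundedByKey_of_lowerTab_of_succ_mem (ht : IsSVT n (colShape k) t) (hI : I.card = k)
    (hjI : j ∈ I → j + 1 ∈ I) (h : BoundedByKey k I (lowerTab j t)) : BoundedByKey k I t := by
  refine boundedByKey_of_lowerTab h fun r hr hx hj => ?_
  by_cases hj0 : j ∈ I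
  · -- `countLt I (j + 1) = r + 1` is impossible: below `j + 1` sits an entry `y ≥ j + 2`,
    -- unless `r` is the last row, where `countLt I (j + 1) < I.card = k`.
    have hj1 := hjI hj0
    rw [countLt_succ_of_mem hj0]
    by_contra hcon
    rcases Nat.lt_or_ge (r + 1) k with hr1 | hr1
    · obtain ⟨y, hy⟩ := ht.nonempty_colShape hr1
      have hjy : j + 1 < y := ht.lt_of_row_lt (Nat.lt_succ_self r) hx hy
      have hy' : countLt I y ≤ r + 1 := by
        simpa [lowerEntry_of_ne hjy.ne'] using boundedByKey_lowerTab_iff.1 h _ hr1 y hy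
      have := countLt_mono I (Nat.succ_le_of_lt hjy)
      rw [countLt_succ_of_mem hj1, countLt_succ_of_mem hj0] at this
      omega
    · have := countLt_lt_card hj1
      rw [countLt_succ_of_mem hj0, hI] at this
      omega
  · rwa [countLt_succ_of_notMem hj0]

lemma boundedByKey_of_lowerTab_of_not_lowerable (ht : IsSVT n (colShape k) t)
    (hL : ¬ Lowerable j t) (h : BoundedByKey k I (lowerTab j t)) : BoundedByKey k I t := by
  refine boundedByKey_of_lowerTab h fun r hr hx _ => ?_
  -- some `j` sits in a box `r' ≠ r`, necessarily above the box of `j + 1`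
  obtain ⟨r', hr', hne⟩ : ∃ r', j ∈ t r' 0 ∧ r' ≠ r := by
    by_contra! hall
    exact hL ⟨r, hx, hall⟩
  have hlt : r' < r := by
    rcases Nat.lt_or_gt_of_ne hne with h' | h'
    · exact h'
    · exact absurd (ht.lt_of_row_lt h' hx hr') (by omega)
  have := boundedByKey_lowerTab_iff.1 h r' (hlt.trans hr) j hr'
  rw [lowerEntry_of_ne (by omega)] at this
  have := countLt_succ_le I j
  omega

lemma boundedByKey_colDemStep_iff (ht : IsSVT n (colShape k) t) (hI : I.card = k) :
    BoundedByKey k I (colDemStep j t) ↔ BoundedByKey k (raiseKey j I) t := by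
  unfold colDemStep raiseKey
  by_cases hL : Lowerable j t <;> by_cases hjI : j ∈ I ∧ j + 1 ∉ I <;>
    simp only [hL, hjI, if_true, if_false]
  · exact (boundedByKey_raise hjI.1 hjI.2).symm
  · exact ⟨boundedByKey_of_lowerTab_of_succ_mem ht hI fun h => by tauto, .lowerTab⟩
  · exact Iff.trans ⟨.lowerTab, boundedByKey_of_lowerTab_of_not_lowerable ht hL⟩
      (boundedByKey_raise hjI.1 hjI.2).symm

lemma boundedByKey_Icc_iff (ht : IsSVT n (colShape k) t) :
    BoundedByKey k (Finset.Icc 1 k) t ↔ t = uTab (colShape k) := by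
  constructor
  · intro h
    funext r c
    by_cases hc : c < colShape k r
    · obtain ⟨rfl, hr⟩ := lt_colShape_iff.1 hc
      have hall : ∀ x ∈ t r 0, x = r + 1 := fun x hx => by
        have := ht.row_succ_le hx
        have := h r hr x hx
        rw [countLt_Icc_one] at this
        omega
      obtain ⟨y, hy⟩ := ht.nonempty_colShape hr
      rw [uTab, if_pos hc, Finset.eq_singleton_iff_unique_mem]
      exact ⟨hall y hy ▸ hy, hall⟩
    · rw [ht.emptyOutside r c hc, uTab, if_neg hc]
  · rintro rfl r hr x hx
    rw [uTab, if_pos (lt_colShape_iff.2 ⟨rfl, hr⟩), Finset.mem_singleton] at hx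
    rw [hx, countLt_Icc_one]
    omega

theorem demReach_colShape_iff (v : List ℕ) (hv : ∀ j ∈ v, 1 ≤ j)
    (ht : IsSVT n (colShape k) t) :
    DemReach n (colShape k) (eK n (colShape k)) v t (uTab (colShape k)) ↔
      BoundedByKey k (demazureKey k v) t := by
  induction v generalizing t with
  | nil => exact (boundedByKey_Icc_iff ht).symm
  | cons j v ih =>
    have hj := hv j List.mem_cons_self
    simp only [DemReach, demStep_colShape_iff ht, exists_eq_left, demazureKey]
    rw [ih (fun a ha => hv a (List.mem_cons_of_mem j ha)) (isSVT_colDemStep ht hj),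
      boundedByKey_colDemStep_iff ht (card_demazureKey k v)]

theorem mem_kDem_colShape_iff {word : List ℕ} (hword : ∀ j ∈ word, 1 ≤ j) :
    t ∈ KDem n (colShape k) (eK n (colShape k)) word ↔
      IsSVT n (colShape k) t ∧ BoundedByKey k (demazureKey k word) t :=
  and_congr_right fun ht => demReach_colShape_iff word hword ht

end KeyCharacterization

section Strings

lemma setOf_iString_eq_insert {f fK : Filling → Option Filling} {b : Filling}
    (hf : ∀ x, f b = some x → f x = none) (hfK : ∀ x, fK b = some x → f x = none) :
    {t | (∃ m, iterOpt f m b = some t) ∨ ∃ t1, fK b = some t1 ∧ ∃ m, iterOpt f m t1 = some t} =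
      insert b {t | f b = some t ∨ fK b = some t} := by
  ext x
  simp only [Set.mem_ofPred_eq, Set.mem_insert_iff]
  constructor
  · rintro (⟨_ | m, hm⟩ | ⟨t1, ht1, m, hm⟩)
    · exact .inl (Option.some.inj hm).symm
    · rw [iterOpt_succ'] at hm
      cases hb : f b with
      | none => simp [hb] at hm
      | some y =>
        rw [hb, Option.bind_some] at hm
        obtain rfl := eq_of_iterOpt_of_eq_none (hf y hb) hm
        exact .inr (.inl rfl)
    · obtain rfl := eq_of_iterOpt_of_eq_none (hfK t1 ht1) hm
      exact .inr (.inr ht1)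
  · rintro (rfl | h | h)
    · exact .inl ⟨0, rfl⟩
    · exact .inl ⟨1, h⟩
    · exact .inr ⟨x, h, 0, rfl⟩

lemma inter_insert_trichotomy {α : Type*} {P T : Set α} {b : α}
    (hT : ∀ x ∈ T, ∀ y ∈ T, x ∈ P → y ∈ P) (hb : ∀ x ∈ T, x ∈ P → b ∈ P) :
    P ∩ insert b T = ∅ ∨ P ∩ insert b T = insert b T ∨ P ∩ insert b T = {b} := by
  by_cases hx : ∃ x ∈ T, x ∈ P
  · obtain ⟨x, hxT, hxP⟩ := hx
    exact .inr (.inl (Set.inter_eq_right.2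
      (Set.insert_subset (hb x hxT hxP) fun y hy => hT x hxT y hy hxP)))
  simp only [not_exists, not_and] at hx
  by_cases hbP : b ∈ P
  · refine .inr (.inr (Set.ext fun y => ⟨?_, ?_⟩))
    · rintro ⟨hy, rfl | hyT⟩
      exacts [rfl, absurd hy (hx y hyT)]
    · rintro rfl
      exact ⟨hbP, .inl rfl⟩
  · refine .inl (Set.eq_empty_iff_forall_notMem.2 ?_)
    rintro y ⟨hy, rfl | hyT⟩
    exacts [hbP hy, hx y hyT hy]

end Strings

section ColumnStrings

variable {n k : ℕ} {t : Filling} {i ρ : ℕ}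

lemma updateBox_apply_self (t : Filling) (r c : ℕ) (A : Finset ℕ) : updateBox t r c A r c = A :=
  if_pos ⟨rfl, rfl⟩

lemma updateBox_apply_of_ne (t : Filling) {r c r' c' : ℕ} (A : Finset ℕ)
    (h : ¬ (r' = r ∧ c' = c)) : updateBox t r c A r' c' = t r' c' :=
  if_neg h

lemma updateBox_self (t : Filling) (r c : ℕ) : updateBox t r c (t r c) = t := by
  funext r' c'
  unfold updateBox
  split_ifs with h
  · rw [h.1, h.2]
  · rfl

lemma isSVT_updateBox_colShape (ht : IsSVT n (colShape k) t) {B : Finset ℕ} (hρ : ρ < k)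
    (hne : B.Nonempty) (hbd : ∀ x ∈ B, 1 ≤ x ∧ x ≤ n)
    (habove : ∀ x ∈ B, ∀ y ∈ t (ρ + 1) 0, x < y)
    (hbelow : ∀ r, r + 1 = ρ → ∀ y ∈ t r 0, ∀ x ∈ B, y < x) :
    IsSVT n (colShape k) (updateBox t ρ 0 B) where
  boxNonempty r c hc := by
    unfold updateBox; split_ifs
    exacts [hne, ht.boxNonempty r c hc]
  emptyOutside r c hc := by
    unfold updateBox; split_ifs with h
    · exact absurd (lt_colShape_iff.2 ⟨h.2, h.1 ▸ hρ⟩) hc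
    · exact ht.emptyOutside r c hc
  entryBounds r c a ha := by
    unfold updateBox at ha; split_ifs at ha
    exacts [hbd a ha, ht.entryBounds r c a ha]
  rowWeak r c a b _ hb := by
    rw [updateBox_apply_of_ne _ _ (by omega), ht.eq_empty_of_pos (Nat.succ_pos c)] at hb
    simp at hb
  colStrict r c a b ha hb := by
    unfold updateBox at ha hb
    split_ifs at ha hb with h1 h2 h2
    · omega
    · obtain ⟨rfl, rfl⟩ := h1
      exact habove a ha b hb
    · obtain ⟨h2, rfl⟩ := h2
      exact hbelow r h2 a ha b hb
    · exact ht.colStrict r c a b ha hb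

lemma isSVT_updateBox_raise (ht : IsSVT n (colShape k) t) (hin : i < n) (hρ : i ∈ t ρ 0)
    (hi1 : ¬ colHas n t (i + 1) 0) {B : Finset ℕ} (hB : i + 1 ∈ B)
    (hBsub : B ⊆ insert (i + 1) (t ρ 0)) : IsSVT n (colShape k) (updateBox t ρ 0 B) := by
  have hmem : ∀ x ∈ B, x = i + 1 ∨ x ∈ t ρ 0 := fun x hx => Finset.mem_insert.1 (hBsub hx)
  refine isSVT_updateBox_colShape ht (ht.mem_colShape hρ).2 ⟨_, hB⟩ (fun x hx => ?_)
    (fun x hx y hy => ?_) (fun r hr y hy x hx => ?_)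
  · rcases hmem x hx with rfl | hx
    exacts [⟨by omega, hin⟩, ht.entryBounds ρ 0 x hx]
  · have hiy := ht.colStrict ρ 0 i y hρ hy
    have hy1 : y ≠ i + 1 := fun h => hi1 ⟨ρ + 1, ht.row_lt hy, h ▸ hy⟩
    rcases hmem x hx with rfl | hx
    exacts [by omega, ht.colStrict ρ 0 x y hx hy]
  · subst hr
    have hyi := ht.colStrict r 0 y i hy hρ
    rcases hmem x hx with rfl | hx
    exacts [by omega, ht.colStrict r 0 y x hy hx]

lemma boundedByKey_updateBox_mono {I : Finset ℕ} {B B' : Finset ℕ}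
    (hB : ∀ x ∈ B', ∃ y ∈ B, x ≤ y) (h : BoundedByKey k I (updateBox t ρ 0 B)) :
    BoundedByKey k I (updateBox t ρ 0 B') := by
  intro r hr x hx
  by_cases hrρ : r = ρ
  · subst hrρ
    rw [updateBox_apply_self] at hx
    obtain ⟨y, hy, hxy⟩ := hB x hx
    exact (countLt_mono I hxy).trans (h r hr y (by rwa [updateBox_apply_self]))
  · rw [updateBox_apply_of_ne _ _ (by tauto)] at hx
    exact h r hr x (by rwa [updateBox_apply_of_ne _ _ (by tauto)])

lemma boundedByKey_updateBox_raise_iff {I : Finset ℕ} :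
    BoundedByKey k I (updateBox t ρ 0 (insert (i + 1) ((t ρ 0).erase i))) ↔
      BoundedByKey k I (updateBox t ρ 0 (insert (i + 1) (t ρ 0))) := by
  refine ⟨boundedByKey_updateBox_mono fun x hx => ?_,
    boundedByKey_updateBox_mono fun x hx => ⟨x, Finset.insert_subset_insert _
      (Finset.erase_subset _ _) hx, le_rfl⟩⟩
  by_cases hxi : x = i
  · exact ⟨i + 1, Finset.mem_insert_self _ _, by omega⟩
  · refine ⟨x, ?_, le_rfl⟩
    rcases Finset.mem_insert.1 hx with rfl | hx
    exacts [Finset.mem_insert_self _ _, Finset.mem_insert_of_mem (Finset.mem_erase.2 ⟨hxi, hx⟩)]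

lemma BoundedByKey.of_updateBox_insert {I : Finset ℕ} {a : ℕ}
    (h : BoundedByKey k I (updateBox t ρ 0 (insert a (t ρ 0)))) : BoundedByKey k I t := by
  simpa only [updateBox_self] using boundedByKey_updateBox_mono (B' := t ρ 0)
    (fun x hx => ⟨x, Finset.mem_insert_of_mem hx, le_rfl⟩) h

lemma iString_colShape_of_raise (ht : IsSVT n (colShape k) t) (hρ : i ∈ t ρ 0)
    (hi1 : ¬ colHas n t (i + 1) 0) :
    {t' | (∃ m, iterOpt (fRaw n (colShape k) i) m t = some t') ∨
        ∃ t1, fK n (colShape k) i t = some t1 ∧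
          ∃ m, iterOpt (fRaw n (colShape k) i) m t1 = some t'} =
      {t, updateBox t ρ 0 (insert (i + 1) ((t ρ 0).erase i)),
        updateBox t ρ 0 (insert (i + 1) (t ρ 0))} := by
  have hnone : ∀ B, i + 1 ∈ B → fRaw n (colShape k) i (updateBox t ρ 0 B) = none :=
    fun B hB => fRaw_colShape_eq_none fun h =>
      h.2 ⟨ρ, ht.row_lt hρ, by rwa [updateBox_apply_self]⟩
  rw [setOf_iString_eq_insert, fRaw_colShape_eq_some ht hρ hi1, fK_colShape_eq_some ht hρ hi1]
  · ext x
    simp [eq_comm]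
  · rw [fRaw_colShape_eq_some ht hρ hi1]
    rintro _ ⟨⟩
    exact hnone _ (Finset.mem_insert_self _ _)
  · rw [fK_colShape_eq_some ht hρ hi1]
    rintro _ ⟨⟩
    exact hnone _ (Finset.mem_insert_self _ _)

lemma iString_colShape_of_not_raise (ht : IsSVT n (colShape k) t)
    (h : ¬ (colHas n t i 0 ∧ ¬ colHas n t (i + 1) 0)) :
    {t' | (∃ m, iterOpt (fRaw n (colShape k) i) m t = some t') ∨
        ∃ t1, fK n (colShape k) i t = some t1 ∧
          ∃ m, iterOpt (fRaw n (colShape k) i) m t1 = some t'} = {t} := by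
  rw [setOf_iString_eq_insert (by simp [fRaw_colShape_eq_none h])
    (by simp [fK_colShape_eq_none ht h]), fRaw_colShape_eq_none h, fK_colShape_eq_none ht h]
  simp

end ColumnStrings

theorem kdem_column_strings_general (n k i : ℕ) (hin : i < n) (b : Filling)
    (hb : IsSVT n (colShape k) b) :
    ∀ (w : Equiv.Perm ℕ) (word : List ℕ), IsReducedWord n w word →
      ∀ S : Set Filling,
        S = {t | (∃ m, iterOpt (fRaw n (colShape k) i) m b = some t) ∨
              ∃ t1, fK n (colShape k) i b = some t1 ∧
                ∃ m, iterOpt (fRaw n (colShape k) i) m t1 = some t} →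
        (KDem n (colShape k) (eK n (colShape k)) word ∩ S = ∅ ∨
         KDem n (colShape k) (eK n (colShape k)) word ∩ S = S ∨
         KDem n (colShape k) (eK n (colShape k)) word ∩ S = {b}) := by
  rintro w word hword S rfl
  set P := KDem n (colShape k) (eK n (colShape k)) word
  have hP (t : Filling) : t ∈ P ↔ _ := mem_kDem_colShape_iff fun j hj => (hword.1 j hj).1
  by_cases hraise : colHas n b i 0 ∧ ¬ colHas n b (i + 1) 0
  · obtain ⟨⟨ρ, -, hρ⟩, hi1⟩ := hraise
    rw [iString_colShape_of_raise hb hρ hi1]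
    have hf := isSVT_updateBox_raise hb hin hρ hi1 (Finset.mem_insert_self _ _)
      (Finset.insert_subset_insert _ (Finset.erase_subset i (b ρ 0)))
    have hfK := isSVT_updateBox_raise hb hin hρ hi1 (Finset.mem_insert_self _ _) subset_rfl
    have hiff := boundedByKey_updateBox_raise_iff (k := k) (I := demazureKey k word)
      (t := b) (ρ := ρ) (i := i)
    have hK := BoundedByKey.of_updateBox_insert (k := k) (I := demazureKey k word)
      (t := b) (ρ := ρ) (a := i + 1)
    refine inter_insert_trichotomy ?_ ?_ <;>
      simp only [Set.mem_insert_iff, Set.mem_singleton_iff, forall_eq_or_imp, forall_eq, hP] <;>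
      tauto
  · rw [iString_colShape_of_not_raise hb hraise]
    by_cases hbP : b ∈ P
    · exact .inr (.inr (Set.inter_eq_right.2 (Set.singleton_subset_iff.2 hbP)))
    · exact .inl (Set.inter_singleton_eq_empty.2 hbP)

/-- for the one-column shape `(1ᵏ)`, let `b` satisfy `e_i b = 0` and
`e_i^K b = 0`, and let `S` be the `i`-K-string through `b` (all nonzero `f_iᵐ b` and
`f_iᵐ f_i^K b`).  Then for every reduced word of every `w ∈ Sₙ`, the intersection of the
K-Demazure crystal with `S` is empty, all of `S`, or the singleton `{b}`. -/
theorem kdem_column_strings (n k i : ℕ) (hn : 2 ≤ n) (hk1 : 1 ≤ k) (hkn : k ≤ n)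
    (hi1 : 1 ≤ i) (hin : i < n) (b : Filling) (hb : IsSVT n (colShape k) b)
    (hhw : eRaw n (colShape k) i b = none) (hhwK : eK n (colShape k) i b = none) :
    ∀ (w : Equiv.Perm ℕ) (word : List ℕ), IsReducedWord n w word →
      ∀ S : Set Filling,
        S = {t | (∃ m, iterOpt (fRaw n (colShape k) i) m b = some t) ∨
              ∃ t1, fK n (colShape k) i b = some t1 ∧
                ∃ m, iterOpt (fRaw n (colShape k) i) m t1 = some t} →
        (KDem n (colShape k) (eK n (colShape k)) word ∩ S = ∅ ∨
         KDem n (colShape k) (eK n (colShape k)) word ∩ S = S ∨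
         KDem n (colShape k) (eK n (colShape k)) word ∩ S = {b}) :=
  kdem_column_strings_general n k i hin b hb

end SVTCrystal

end
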